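/- arXiv:2512.00608 — 7 statements merged into one kernel-verified Lean document; each statement's English description precedes it below -/
import Mathlib

section
/- For every integer L ≥ 1, the function f_L(β) := (1 − β^{2L})² / (L² · β^{2L} · (1 − β²)) is strictly decreasing on the open interval (0, 1); that is, for all β₁, β₂ ∈ (0,1) with β₁ < β₂ one has f_L(β₂) < f_L(β₁). -/
lemma fL_identity (L : ℕ) (x : ℝ) (hx0 : 0 < x) (hx1 : x < 1) :
    (1 - x ^ L) ^ 2 / (x ^ L * (1 - x)) =
      ∑ j ∈ Finset.range L, ((x ^ (j + 1))⁻¹ - x ^ j) := by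
  have hxne : x ≠ 0 := ne_of_gt hx0
  have hx1' : x ≠ 1 := ne_of_lt hx1
  have hinv1 : x⁻¹ ≠ 1 := by
    intro h
    exact hx1' (by field_simp at h; simp [h])
  rw [Finset.sum_sub_distrib]
  have h1 : ∑ j ∈ Finset.range L, (x ^ (j + 1))⁻¹
      = x⁻¹ * ((x⁻¹) ^ L - 1) / (x⁻¹ - 1) := by
    have : ∀ j, (x ^ (j + 1))⁻¹ = x⁻¹ * (x⁻¹) ^ j := by
      intro j; rw [pow_succ, mul_inv, inv_pow]; ring
    simp only [this]
    rw [← Finset.mul_sum, geom_sum_eq hinv1, mul_div_assoc]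
  have h2 : ∑ j ∈ Finset.range L, x ^ j = (x ^ L - 1) / (x - 1) :=
    geom_sum_eq hx1' L
  rw [h1, h2]
  have hxL : x ^ L ≠ 0 := pow_ne_zero _ hxne
  have hx1ne : x - 1 ≠ 0 := sub_ne_zero.mpr hx1'
  have hinv1ne : x⁻¹ - 1 ≠ 0 := sub_ne_zero.mpr hinv1
  have h1mx : (1 : ℝ) - x ≠ 0 := sub_ne_zero.mpr (fun h => hx1' h.symm)
  simp only [inv_pow]
  field_simp
  ring

lemma sum_anti (L : ℕ) (hL : 1 ≤ L) (x₁ x₂ : ℝ) (h0 : 0 < x₁) (h12 : x₁ < x₂)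
    (h1 : x₂ < 1) :
    ∑ j ∈ Finset.range L, ((x₂ ^ (j + 1))⁻¹ - x₂ ^ j) <
      ∑ j ∈ Finset.range L, ((x₁ ^ (j + 1))⁻¹ - x₁ ^ j) := by
  apply Finset.sum_lt_sum_of_nonempty
  · exact Finset.nonempty_range_iff.mpr (by omega)
  · intro j _
    have hp1 : (0:ℝ) < x₁ ^ (j + 1) := pow_pos h0 _
    have hlt : x₁ ^ (j + 1) < x₂ ^ (j + 1) :=
      pow_lt_pow_left₀ h12 (le_of_lt h0) (Nat.succ_ne_zero j)
    have hinv : (x₂ ^ (j + 1))⁻¹ < (x₁ ^ (j + 1))⁻¹ :=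
      one_div_lt_one_div_of_lt hp1 hlt |>.trans_eq (one_div _) |>.trans_eq' (one_div _)
    have hpow : x₁ ^ j ≤ x₂ ^ j := pow_le_pow_left₀ (le_of_lt h0) (le_of_lt h12) j
    linarith

theorem fL_strictAntiOn (L : ℕ) (hL : 1 ≤ L) (β₁ β₂ : ℝ)
    (h0 : 0 < β₁) (h12 : β₁ < β₂) (h1 : β₂ < 1) :
    (1 - β₂ ^ (2 * L)) ^ 2 / ((L : ℝ) ^ 2 * β₂ ^ (2 * L) * (1 - β₂ ^ 2)) <
      (1 - β₁ ^ (2 * L)) ^ 2 / ((L : ℝ) ^ 2 * β₁ ^ (2 * L) * (1 - β₁ ^ 2)) := by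
  have h01 : β₁ < 1 := h12.trans h1
  have h02 : 0 < β₂ := h0.trans h12
  set x₁ := β₁ ^ 2 with hx1def
  set x₂ := β₂ ^ 2 with hx2def
  have hx10 : 0 < x₁ := pow_pos h0 2
  have hx12 : x₁ < x₂ := pow_lt_pow_left₀ h12 (le_of_lt h0) two_ne_zero
  have hx21 : x₂ < 1 := by
    calc x₂ < 1 ^ 2 := pow_lt_pow_left₀ h1 (le_of_lt h02) two_ne_zero
    _ = 1 := one_pow 2
  have hrw : ∀ β : ℝ, β ^ (2 * L) = (β ^ 2) ^ L := fun β => pow_mul β 2 L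
  rw [hrw, hrw]
  have key := (fL_identity L x₁ hx10 (hx12.trans hx21)) ▸ (fL_identity L x₂ (hx10.trans hx12) hx21) ▸
    sum_anti L hL x₁ x₂ hx10 hx12 hx21
  have hL2 : (0:ℝ) < (L : ℝ) ^ 2 := by positivity
  have e : ∀ x : ℝ, (1 - x ^ L) ^ 2 / ((L : ℝ) ^ 2 * x ^ L * (1 - x)) =
      ((1 - x ^ L) ^ 2 / (x ^ L * (1 - x))) / (L : ℝ) ^ 2 := by
    intro x; rw [div_div]; ring_nf
  rw [e, e]
  gcongr
end

section
/- For every integer L ≥ 1 and every real c > 0, there exists a unique β ∈ (0,1) such that (1 − β^{2L})² / (L² · β^{2L} · (1 − β²)) = c. -/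
open Finset

/-- The substituted function `G t = ∑_{k<L} (t^k/t^L - t^k)`. -/
private noncomputable def Gfun (L : ℕ) (t : ℝ) : ℝ :=
  ∑ k ∈ Finset.range L, (t ^ k / t ^ L - t ^ k)

private lemma aux_id (L : ℕ) {t : ℝ} (ht0 : 0 < t) (ht1 : t < 1) :
    Gfun L t = (1 - t ^ L) ^ 2 / (t ^ L * (1 - t)) := by
  have h1 : t ≠ 1 := by linarith
  have h2 : (t : ℝ) ^ L ≠ 0 := pow_ne_zero _ ht0.ne'
  have h3 : (1:ℝ) - t ≠ 0 := by linarith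
  have h4 : t - 1 ≠ 0 := sub_ne_zero.mpr h1
  unfold Gfun
  rw [Finset.sum_sub_distrib, ← Finset.sum_div, geom_sum_eq h1 L]
  field_simp
  ring

private lemma aux_anti (L : ℕ) (hL : 1 ≤ L) {t1 t2 : ℝ} (h0 : 0 < t1) (h12 : t1 < t2)
    (h2 : t2 < 1) : Gfun L t2 < Gfun L t1 := by
  have h02 : 0 < t2 := h0.trans h12
  apply Finset.sum_lt_sum_of_nonempty (Finset.nonempty_range_iff.mpr (by omega))
  intro k hk
  have hk' : k < L := Finset.mem_range.mp hk
  have e1 : ∀ s : ℝ, 0 < s → s ^ k / s ^ L = 1 / s ^ (L - k) := by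
    intro s hs
    have : s ^ L = s ^ k * s ^ (L - k) := by rw [← pow_add]; congr 1; omega
    rw [this, div_mul_eq_div_div, div_self (pow_ne_zero _ hs.ne')]
  rw [e1 t1 h0, e1 t2 h02]
  have hm : 1 ≤ L - k := by omega
  have hp : t1 ^ (L - k) < t2 ^ (L - k) := pow_lt_pow_left₀ h12 h0.le (by omega)
  have hinv : 1 / t2 ^ (L - k) < 1 / t1 ^ (L - k) :=
    one_div_lt_one_div_of_lt (pow_pos h0 _) hp
  have hk2 : t1 ^ k ≤ t2 ^ k := pow_le_pow_left₀ h0.le h12.le k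
  linarith

private lemma f_eq_of_mem (L : ℕ) (hL : 1 ≤ L) {β : ℝ} (hβ : β ∈ Set.Ioo (0 : ℝ) 1) :
    (1 - β ^ (2 * L)) ^ 2 / ((L : ℝ) ^ 2 * β ^ (2 * L) * (1 - β ^ 2)) =
      Gfun L (β ^ 2) / (L : ℝ) ^ 2 := by
  obtain ⟨h0, h1⟩ := hβ
  have ht0 : 0 < β ^ 2 := by positivity
  have ht1 : β ^ 2 < 1 := by nlinarith
  rw [aux_id L ht0 ht1]
  have hpow : β ^ (2 * L) = (β ^ 2) ^ L := by rw [← pow_mul]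
  rw [hpow]
  have hne1 : (1:ℝ) - β ^ 2 ≠ 0 := by nlinarith
  have hne2 : ((β:ℝ) ^ 2) ^ L ≠ 0 := pow_ne_zero _ (by positivity)
  rw [div_div]
  ring

theorem fL_eq_c_existsUnique (L : ℕ) (hL : 1 ≤ L) (c : ℝ) (hc : 0 < c) :
    ∃! β : ℝ, β ∈ Set.Ioo (0 : ℝ) 1 ∧
      (1 - β ^ (2 * L)) ^ 2 / ((L : ℝ) ^ 2 * β ^ (2 * L) * (1 - β ^ 2)) = c := by
  have hL0 : (0:ℝ) < (L:ℝ) := by exact_mod_cast Nat.pos_of_ne_zero (by omega)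
  have hL2 : (0:ℝ) < (L:ℝ) ^ 2 := by positivity
  set D : ℝ := c * (L:ℝ) ^ 2 with hDdef
  have hD : 0 < D := by positivity
  -- pick a small t0 with Gfun L t0 ≥ D
  set t0 : ℝ := min (1/2) (1/(D+1)) with ht0def
  have ht00 : 0 < t0 := lt_min (by norm_num) (by positivity)
  have ht01 : t0 < 1 := lt_of_le_of_lt (min_le_left _ _) (by norm_num)
  have hGt0 : D ≤ Gfun L t0 := by
    have hterm0 : t0 ^ 0 / t0 ^ L - t0 ^ 0 ≤ Gfun L t0 := by
      apply Finset.single_le_sum (f := fun k => t0 ^ k / t0 ^ L - t0 ^ k)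
        (fun k hk => ?_) (Finset.mem_range.mpr (show 0 < L by omega))
      · have hkL : t0 ^ L ≤ t0 ^ k := by
          apply pow_le_pow_of_le_one ht00.le ht01.le (Finset.mem_range.mp hk).le
        have hL1 : t0 ^ L ≤ 1 := (pow_le_one₀ ht00.le ht01.le)
        have : t0 ^ k ≤ t0 ^ k / t0 ^ L := by
          rw [le_div_iff₀ (pow_pos ht00 L)]
          nlinarith [pow_pos ht00 k]
        linarith
    simp only [pow_zero] at hterm0
    have h1 : t0 ^ L ≤ t0 := by
      calc t0 ^ L ≤ t0 ^ 1 := by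
            apply pow_le_pow_of_le_one ht00.le ht01.le hL
        _ = t0 := pow_one t0
    have h2 : 1 / t0 ≤ 1 / t0 ^ L := by
      apply one_div_le_one_div_of_le (pow_pos ht00 L) h1
    have h3 : D + 1 ≤ 1 / t0 := by
      have : t0 ≤ 1/(D+1) := min_le_right _ _
      rw [le_div_iff₀ ht00]
      calc (D+1) * t0 ≤ (D+1) * (1/(D+1)) := by
            apply mul_le_mul_of_nonneg_left this (by linarith)
        _ = 1 := by field_simp
    linarith
  -- continuity of Gfun on [t0, 1]
  have hcont : ContinuousOn (Gfun L) (Set.Icc t0 1) := by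
    apply continuousOn_finset_sum
    intro k hk
    apply ContinuousOn.sub
    · apply ContinuousOn.div (continuous_pow k).continuousOn (continuous_pow L).continuousOn
      intro x hx
      exact pow_ne_zero _ (ne_of_gt (lt_of_lt_of_le ht00 hx.1))
    · exact (continuous_pow k).continuousOn
  have hG1 : Gfun L 1 = 0 := by
    unfold Gfun; simp
  have hivt : D ∈ Gfun L '' Set.Icc t0 1 := by
    have := intermediate_value_Icc' ht01.le hcont
    apply this
    rw [hG1]
    exact ⟨hD.le, hGt0⟩
  obtain ⟨s, hs, hGs⟩ := hivt
  have hs1 : s < 1 := by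
    rcases lt_or_eq_of_le hs.2 with h | h
    · exact h
    · exfalso; rw [h, hG1] at hGs; linarith
  have hs0 : 0 < s := lt_of_lt_of_le ht00 hs.1
  -- β := √s
  set β : ℝ := Real.sqrt s with hβdef
  have hβ0 : 0 < β := Real.sqrt_pos.mpr hs0
  have hβsq : β ^ 2 = s := Real.sq_sqrt hs0.le
  have hβ1 : β < 1 := by
    nlinarith [hβsq, hβ0]
  have hβmem : β ∈ Set.Ioo (0:ℝ) 1 := ⟨hβ0, hβ1⟩
  refine ⟨β, ⟨hβmem, ?_⟩, ?_⟩
  · rw [f_eq_of_mem L hL hβmem, hβsq, hGs, hDdef]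
    field_simp
  · rintro y ⟨hymem, hy⟩
    rw [f_eq_of_mem L hL hymem] at hy
    have hyG : Gfun L (y ^ 2) = D := by
      rw [hDdef]
      field_simp at hy ⊢
      linarith
    have hy0 := hymem.1
    have hy1 := hymem.2
    have hysq0 : 0 < y ^ 2 := by positivity
    have hysq1 : y ^ 2 < 1 := by nlinarith
    have hβsq1 : β ^ 2 < 1 := by nlinarith
    have heq : y ^ 2 = β ^ 2 := by
      by_contra hne
      rcases lt_or_gt_of_ne hne with h | h
      · have := aux_anti L hL hysq0 h hβsq1
        rw [hyG, hβsq, hGs] at this; linarith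
      · have := aux_anti L hL (by positivity : (0:ℝ) < β ^ 2) h hysq1
        rw [hyG, hβsq, hGs] at this; linarith
    nlinarith [heq, hy0, hβ0]
end

section
/- Fix an integer L ≥ 1 and a real β ∈ (0,1). Then the sequence n ↦ (1/n) · ((1 − β^{2L})/(L·β))² · Σ_{k=0}^{n−1} (n − k) · β^{2k} / β^{4·(k mod L)} converges, as n → ∞, to (1 − β^{2L})² / (L² · β^{2L} · (1 − β²)). -/
open Filter Finset Topology
set_option maxHeartbeats 1000000

theorem frobenius_norm_sq_per_channel_use_limit (L : ℕ) (hL : 1 ≤ L) (β : ℝ)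
    (hβ0 : 0 < β) (hβ1 : β < 1) :
    Filter.Tendsto
      (fun n : ℕ => (1 / (n : ℝ)) * ((1 - β ^ (2 * L)) / (L * β)) ^ 2 *
        ∑ k ∈ Finset.range n, ((n : ℝ) - (k : ℝ)) * β ^ (2 * k) / β ^ (4 * (k % L)))
      Filter.atTop
      (nhds ((1 - β ^ (2 * L)) ^ 2 / ((L : ℝ) ^ 2 * β ^ (2 * L) * (1 - β ^ 2)))) := by
  haveI : NeZero L := ⟨by omega⟩
  have hβne : β ≠ 0 := ne_of_gt hβ0
  set a : ℕ → ℝ := fun k => β ^ (2 * k) / β ^ (4 * (k % L)) with ha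
  set c : ℝ := β ^ 2 / β ^ 4 with hc
  -- geometric sum
  have hx0 : (0:ℝ) ≤ β ^ (2 * L) := by positivity
  have hx1 : β ^ (2 * L) < 1 := pow_lt_one₀ hβ0.le hβ1 (by omega)
  have hg : HasSum (fun q : ℕ => (β ^ (2 * L)) ^ q) (1 - β ^ (2 * L))⁻¹ :=
    hasSum_geometric_of_lt_one hx0 hx1
  have hh : HasSum (fun r : Fin L => c ^ (r : ℕ)) (∑ r : Fin L, c ^ (r : ℕ)) :=
    hasSum_fintype _
  have hcpos : 0 < c := by rw [hc]; positivity
  have hfs : Summable (fun p : ℕ × Fin L => (β ^ (2 * L)) ^ p.1 * c ^ (p.2 : ℕ)) :=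
    hg.summable.mul_of_nonneg hh.summable (fun q => by positivity) (fun r => by positivity)
  have hf : HasSum (fun p : ℕ × Fin L => (β ^ (2 * L)) ^ p.1 * c ^ (p.2 : ℕ))
      ((1 - β ^ (2 * L))⁻¹ * ∑ r : Fin L, c ^ (r : ℕ)) := hg.mul hh hfs
  set S : ℝ := (1 - β ^ (2 * L))⁻¹ * ∑ r : Fin L, c ^ (r : ℕ) with hS
  have hk : ∀ k : ℕ, a k = (β ^ (2 * L)) ^ (k / L) * c ^ (k % L) := by
    intro k
    have e1 : 2 * k = 2 * L * (k / L) + 2 * (k % L) := by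
      conv_lhs => rw [← Nat.div_add_mod k L]
      ring
    simp only [ha, hc]
    rw [e1, pow_add, div_pow, pow_mul, pow_mul β 2, pow_mul β 4, mul_div_assoc, pow_mul β 2 (k % L)]
  have hA : HasSum a S := by
    have h2 := (Nat.divModEquiv L).hasSum_iff.mpr hf
    refine HasSum.congr_fun h2 (fun k => ?_)
    rw [hk k]
    simp [Nat.divModEquiv, Function.comp, Fin.val_natCast]
  -- partial sums of a tend to S
  have hu : Tendsto (fun n : ℕ => ∑ k ∈ range (n + 1), a k) atTop (𝓝 S) :=
    hA.tendsto_sum_nat.comp (tendsto_add_atTop_nat 1)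
  have hces := hu.cesaro
  -- identify the double sum
  have key : ∀ n : ℕ, ∑ k ∈ range n, ((n : ℝ) - (k : ℝ)) * a k
      = ∑ i ∈ range n, ∑ k ∈ range (i + 1), a k := by
    intro n
    induction n with
    | zero => simp
    | succ n ih =>
      rw [Finset.sum_range_succ (fun i => ∑ k ∈ range (i + 1), a k), ← ih,
        Finset.sum_range_succ, Finset.sum_range_succ]
      push_cast
      have : ∀ k ∈ range n, ((n : ℝ) + 1 - k) * a k = ((n : ℝ) - k) * a k + a k := by
        intro k _; ring
      rw [Finset.sum_congr rfl this, Finset.sum_add_distrib]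
      ring
  set C : ℝ := ((1 - β ^ (2 * L)) / (L * β)) ^ 2 with hC
  have hmain : Tendsto (fun n : ℕ => (1 / (n : ℝ)) * C *
      ∑ k ∈ range n, ((n : ℝ) - (k : ℝ)) * β ^ (2 * k) / β ^ (4 * (k % L))) atTop (𝓝 (C * S)) := by
    have := hces.const_mul C
    refine this.congr (fun n => ?_)
    have hsum : ∑ k ∈ range n, ((n : ℝ) - (k : ℝ)) * β ^ (2 * k) / β ^ (4 * (k % L))
        = ∑ k ∈ range n, ((n : ℝ) - (k : ℝ)) * a k := by
      refine Finset.sum_congr rfl fun k _ => ?_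
      rw [ha]; ring
    rw [hsum, key n]
    ring
  -- identify limits
  have hval : C * S = (1 - β ^ (2 * L)) ^ 2 / ((L : ℝ) ^ 2 * β ^ (2 * L) * (1 - β ^ 2)) := by
    have hLne : (L : ℝ) ≠ 0 := Nat.cast_ne_zero.mpr (by omega)
    have hb2 : β ^ 2 < 1 := pow_lt_one₀ hβ0.le hβ1 (by omega)
    have h2 : (1 - β ^ 2) ≠ 0 := by linarith
    have h41 : β ^ 4 < β ^ 2 := by nlinarith [pow_pos hβ0 2, hb2]
    have h2L : (1 - β ^ (2 * L)) ≠ 0 := by linarith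
    have hcne1 : c ≠ 1 := by
      rw [hc]
      have : (1:ℝ) < β ^ 2 / β ^ 4 := (one_lt_div (by positivity)).mpr h41
      exact ne_of_gt this
    have hfin : ∑ r : Fin L, c ^ (r : ℕ) = (c ^ L - 1) / (c - 1) := by
      rw [Fin.sum_univ_eq_sum_range]
      exact geom_sum_eq hcne1 L
    rw [hC, hS, hfin, hc]
    have hcl : (β ^ 2 / β ^ 4) ^ L = β ^ (2 * L) / β ^ (4 * L) := by
      rw [div_pow, ← pow_mul, ← pow_mul]
    rw [hcl]
    have hb4 : β ^ (4 * L) = β ^ (2 * L) * β ^ (2 * L) := by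
      rw [← pow_add]; ring_nf
    have hd : β ^ 2 / β ^ 4 - 1 = (β ^ 2 - β ^ 4) / β ^ 4 := by field_simp
    have hβ2L : β ^ (2 * L) ≠ 0 := pow_ne_zero _ hβne
    have h24 : β ^ 2 - β ^ 4 ≠ 0 := by linarith
    field_simp
    ring
  rw [← hval]
  exact hmain
end

section
/- Let β ∈ (0,1), c > 0, and R be reals with 0 < R ≤ −log₂(β). Define the Q-function by Q(x) := (1/√(2π)) · ∫_x^∞ exp(−u²/2) du. Then the sequence N ↦ 2·(1 − 2^{−2NR}) · Q(√(6·c·N·β^{−2N} / (2^{2NR} − 1))) tends to 0 as N → ∞. -/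
/-- The standard Gaussian tail function `Q(x) = (1/√(2π)) ∫_x^∞ exp(-u²/2) du`. -/
noncomputable def gaussQ (x : ℝ) : ℝ :=
  (1 / Real.sqrt (2 * Real.pi)) * ∫ u in Set.Ioi x, Real.exp (-u ^ 2 / 2)

open Real Filter MeasureTheory Set

lemma gauss_integrable : Integrable (fun u : ℝ => Real.exp (-u ^ 2 / 2)) := by
  have := integrable_exp_neg_mul_sq (show (0:ℝ) < 1/2 by norm_num)
  convert this using 2 with u
  ring_nf

lemma gaussQ_nonneg (x : ℝ) : 0 ≤ gaussQ x := by
  apply mul_nonneg (by positivity)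
  apply integral_nonneg
  intro u; positivity

lemma gaussQ_anti {x y : ℝ} (h : x ≤ y) : gaussQ y ≤ gaussQ x := by
  apply mul_le_mul_of_nonneg_left _ (by positivity)
  apply setIntegral_mono_set gauss_integrable.integrableOn
  · filter_upwards with u using by positivity
  · exact HasSubset.Subset.eventuallyLE (Set.Ioi_subset_Ioi h)

lemma tendsto_sqrt_atTop : Tendsto Real.sqrt atTop atTop := by
  apply tendsto_atTop_atTop_of_monotone (fun x y h => Real.sqrt_le_sqrt h)
  intro b
  refine ⟨b ^ 2 ⊔ 0, ?_⟩
  rcases le_or_gt b 0 with hb | hb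
  · exact hb.trans (Real.sqrt_nonneg _)
  · calc b = Real.sqrt (b ^ 2) := (Real.sqrt_sq hb.le).symm
      _ ≤ _ := Real.sqrt_le_sqrt le_sup_left

lemma gaussQ_tendsto {a : ℕ → ℝ} (hmono : Monotone a) (ha : Tendsto a atTop atTop) :
    Tendsto (fun N => gaussQ (a N)) atTop (nhds 0) := by
  have hs : ∀ N, MeasurableSet (Set.Ioi (a N)) := fun N => measurableSet_Ioi
  have hanti : Antitone (fun N => Set.Ioi (a N)) := fun m n h => Set.Ioi_subset_Ioi (hmono h)
  have hInter : (⋂ n, Set.Ioi (a n)) = ∅ := by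
    ext x
    simp only [Set.mem_iInter, Set.mem_Ioi, Set.mem_empty_iff_false, iff_false, not_forall, not_lt]
    obtain ⟨n, hn⟩ := (ha.eventually_ge_atTop x).exists
    exact ⟨n, hn⟩
  have := Antitone.tendsto_setIntegral (f := fun u : ℝ => Real.exp (-u ^ 2 / 2))
    (μ := volume) hs hanti gauss_integrable.integrableOn
  rw [hInter] at this
  simp only [MeasureTheory.setIntegral_empty] at this
  have h2 := this.const_mul (1 / Real.sqrt (2 * Real.pi))
  simpa [gaussQ] using h2

theorem bler_tendsto_zero (β c R : ℝ) (hβ0 : 0 < β) (hβ1 : β < 1) (hc : 0 < c)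
    (hR0 : 0 < R) (hR : R ≤ -Real.logb 2 β) :
    Filter.Tendsto
      (fun N : ℕ =>
        2 * (1 - (2 : ℝ) ^ (-(2 * (N : ℝ) * R))) *
          gaussQ (Real.sqrt (6 * c * (N : ℝ) * β ^ (-(2 * (N : ℤ))) /
            ((2 : ℝ) ^ (2 * (N : ℝ) * R) - 1))))
      Filter.atTop (nhds 0) := by
  set a : ℕ → ℝ := fun N => Real.sqrt (6 * c * N) with ha_def
  have hmono : Monotone a := by
    intro m n h
    apply Real.sqrt_le_sqrt
    have : (m : ℝ) ≤ n := Nat.cast_le.mpr h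
    nlinarith
  have haT : Tendsto a atTop atTop := by
    apply _root_.tendsto_sqrt_atTop.comp
    apply Tendsto.const_mul_atTop (by positivity : (0:ℝ) < 6 * c)
    exact tendsto_natCast_atTop_atTop
  have hQ : Tendsto (fun N => 2 * gaussQ (a N)) atTop (nhds 0) := by
    simpa using (gaussQ_tendsto hmono haT).const_mul 2
  apply squeeze_zero' ?_ ?_ hQ
  · filter_upwards with N
    have h1 : (2:ℝ) ^ (-(2 * (N : ℝ) * R)) ≤ 1 :=
      Real.rpow_le_one_of_one_le_of_nonpos one_le_two (neg_nonpos.mpr (by positivity))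
    have := gaussQ_nonneg (Real.sqrt (6 * c * (N : ℝ) * β ^ (-(2 * (N : ℤ))) /
            ((2 : ℝ) ^ (2 * (N : ℝ) * R) - 1)))
    nlinarith
  · filter_upwards [eventually_ge_atTop 1] with N hN
    have hNpos : (0:ℝ) < N := by exact_mod_cast hN
    have hden : (0:ℝ) < (2 : ℝ) ^ (2 * (N : ℝ) * R) - 1 := by
      have : (1:ℝ) < (2:ℝ) ^ (2 * (N : ℝ) * R) :=
        (Real.one_lt_rpow_iff_of_pos two_pos).mpr (Or.inl ⟨one_lt_two, by positivity⟩)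
      linarith
    have hzpow : β ^ (-(2 * (N : ℤ))) = β ^ (-(2 * (N : ℝ))) := by
      rw [← Real.rpow_intCast β (-(2 * (N : ℤ)))]
      push_cast
      ring_nf
    have hle : (2 : ℝ) ^ (2 * (N : ℝ) * R) ≤ β ^ (-(2 * (N : ℤ))) := by
      have h1 : 2 * (N : ℝ) * R ≤ 2 * (N : ℝ) * (-Real.logb 2 β) := by
        apply mul_le_mul_of_nonneg_left hR (by positivity)
      have h2 : (2:ℝ) ^ (2 * (N : ℝ) * R) ≤ (2:ℝ) ^ (2 * (N : ℝ) * (-Real.logb 2 β)) :=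
        Real.rpow_le_rpow_of_exponent_le one_le_two h1
      have h3 : (2:ℝ) ^ (2 * (N : ℝ) * (-Real.logb 2 β)) = β ^ (-(2 * (N : ℝ))) := by
        rw [show 2 * (N : ℝ) * (-Real.logb 2 β) = Real.logb 2 β * (-(2 * (N : ℝ))) by ring,
          Real.rpow_mul (by norm_num) , Real.rpow_logb two_pos (by norm_num) hβ0]
      rw [hzpow, ← h3]; exact h2
    have harg : a N ≤ Real.sqrt (6 * c * (N : ℝ) * β ^ (-(2 * (N : ℤ))) /
            ((2 : ℝ) ^ (2 * (N : ℝ) * R) - 1)) := by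
      apply Real.sqrt_le_sqrt
      rw [le_div_iff₀ hden]
      have hb : (0:ℝ) < β ^ (-(2 * (N : ℤ))) := zpow_pos hβ0 _
      nlinarith [mul_le_mul_of_nonneg_left (show (2 : ℝ) ^ (2 * (N : ℝ) * R) - 1 ≤ β ^ (-(2 * (N : ℤ))) by linarith) (show (0:ℝ) ≤ 6 * c * N by positivity)]
    have hQle := gaussQ_anti harg
    have h1 : (2:ℝ) ^ (-(2 * (N : ℝ) * R)) ≤ 1 :=
      Real.rpow_le_one_of_one_le_of_nonpos one_le_two (neg_nonpos.mpr (by positivity))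
    have h2 : (0:ℝ) < (2:ℝ) ^ (-(2 * (N : ℝ) * R)) := Real.rpow_pos_of_pos two_pos _
    have h3 := gaussQ_nonneg (Real.sqrt (6 * c * (N : ℝ) * β ^ (-(2 * (N : ℤ))) /
            ((2 : ℝ) ^ (2 * (N : ℝ) * R) - 1)))
    nlinarith
end

section
/- Let c > 0 and let β : ℕ → ℝ be a sequence such that for every integer L ≥ 2 one has 0 < β_L < 1 and (1 − β_L^{2L})² / (L² · β_L^{2L} · (1 − β_L²)) = c/L. Then β_L tends to 1 as L → ∞. -/
theorem betaL_tendsto_one (c : ℝ) (hc : 0 < c) (β : ℕ → ℝ)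
    (hβ : ∀ L : ℕ, 2 ≤ L → 0 < β L ∧ β L < 1 ∧
      (1 - β L ^ (2 * L)) ^ 2 / ((L : ℝ) ^ 2 * β L ^ (2 * L) * (1 - β L ^ 2)) = c / L) :
    Filter.Tendsto β Filter.atTop (nhds 1) := by
  rw [Metric.tendsto_atTop]
  intro ε hε
  -- reduce to ε' = min ε (1/2) < 1
  set ε' : ℝ := min ε (1/2) with hε'def
  have hε'0 : 0 < ε' := lt_min hε (by norm_num)
  have hε'1 : ε' < 1 := lt_of_le_of_lt (min_le_right _ _) (by norm_num)
  set r : ℝ := (1 - ε') ^ 2 with hrdef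
  have hr0 : 0 ≤ r := sq_nonneg _
  have hr1 : r < 1 := by
    have h1 : (0:ℝ) ≤ 1 - ε' := by linarith
    have := pow_lt_one₀ h1 (by linarith : 1 - ε' < 1) (two_ne_zero)
    simpa [hrdef] using this
  have hlim : Filter.Tendsto (fun n : ℕ ↦ (n : ℝ) * r ^ n) Filter.atTop (nhds 0) :=
    tendsto_self_mul_const_pow_of_lt_one hr0 hr1
  have hlim2 : Filter.Tendsto (fun n : ℕ ↦ c * ((n : ℝ) * r ^ n)) Filter.atTop (nhds 0) := by
    simpa using hlim.const_mul c
  have hev1 : ∀ᶠ n : ℕ in Filter.atTop, c * ((n : ℝ) * r ^ n) < 1/4 := by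
    have := hlim2.eventually (eventually_lt_nhds (by norm_num : (0:ℝ) < 1/4))
    exact this
  have hev2 : ∀ᶠ n : ℕ in Filter.atTop, r ^ n < 1/2 := by
    have hlimr : Filter.Tendsto (fun n : ℕ ↦ r ^ n) Filter.atTop (nhds 0) :=
      tendsto_pow_atTop_nhds_zero_of_lt_one hr0 hr1
    exact hlimr.eventually (eventually_lt_nhds (by norm_num : (0:ℝ) < 1/2))
  have hev3 : ∀ᶠ n : ℕ in Filter.atTop, 2 ≤ n := Filter.eventually_atTop.2 ⟨2, fun n h ↦ h⟩
  obtain ⟨N, hN⟩ := Filter.eventually_atTop.1 ((hev1.and hev2).and hev3)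
  refine ⟨N, fun L hL ↦ ?_⟩
  obtain ⟨⟨h14, h12⟩, hL2⟩ := hN L hL
  obtain ⟨hb0, hb1, heq⟩ := hβ L hL2
  -- claim : β L > 1 - ε'
  have key : 1 - ε' < β L := by
    by_contra hle
    push_neg at hle
    -- then β L ^ (2L) ≤ r ^ L
    have hx : β L ^ (2 * L) ≤ r ^ L := by
      have : β L ^ (2 * L) = (β L ^ 2) ^ L := by rw [← pow_mul]
      rw [this, hrdef]
      exact pow_le_pow_left₀ (sq_nonneg _) (by
        have := pow_le_pow_left₀ hb0.le hle 2
        simpa using this) L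
    have hxpos : 0 < β L ^ (2 * L) := pow_pos hb0 _
    have hb2 : β L ^ 2 < 1 := pow_lt_one₀ hb0.le hb1 two_ne_zero
    have hden : (0:ℝ) < (L : ℝ) ^ 2 * β L ^ (2 * L) * (1 - β L ^ 2) := by
      have hLpos : (0:ℝ) < (L : ℝ) ^ 2 := by positivity
      exact mul_pos (mul_pos hLpos hxpos) (by linarith)
    have hLne : (L : ℝ) ≠ 0 := by positivity
    have heq2 : (1 - β L ^ (2 * L)) ^ 2 = c * L * (β L ^ (2 * L) * (1 - β L ^ 2)) := by
      rw [div_eq_div_iff hden.ne' hLne] at heq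
      exact mul_right_cancel₀ hLne (by linear_combination heq)
    -- RHS bound
    have hrhs : c * L * (β L ^ (2 * L) * (1 - β L ^ 2)) ≤ c * ((L : ℝ) * r ^ L) := by
      have h1 : β L ^ (2 * L) * (1 - β L ^ 2) ≤ r ^ L := by
        nlinarith [hxpos, hx, hb2, sq_nonneg (β L)]
      have hcL : (0:ℝ) ≤ c * L := by positivity
      calc c * L * (β L ^ (2 * L) * (1 - β L ^ 2)) ≤ c * L * r ^ L :=
            mul_le_mul_of_nonneg_left h1 hcL
        _ = c * ((L:ℝ) * r ^ L) := by ring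
    -- LHS bound
    have hlhs : (1/4 : ℝ) < (1 - β L ^ (2 * L)) ^ 2 := by
      have : β L ^ (2 * L) < 1/2 := lt_of_le_of_lt hx h12
      nlinarith
    linarith
  -- conclude
  have : dist (β L) 1 = 1 - β L := by
    rw [Real.dist_eq, abs_of_nonpos (by linarith)]
    ring
  rw [this]
  have : 1 - β L < ε' := by linarith
  exact lt_of_lt_of_le this (min_le_left _ _)
end

section
/- Let c > 0 and let β : ℕ → ℝ be a sequence such that for every integer L ≥ 2 one has 0 < β_L < 1 and (1 − β_L^{2L})² / (L² · β_L^{2L} · (1 − β_L²)) = c/L. Let α > 0 be the real number satisfying (1 − e^{−2α})² / (2α · e^{−2α}) = c. Then the sequence L ↦ −L · log₂(β_L) converges to α / ln(2) as L → ∞. -/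
open Real Filter Set

noncomputable def gfun (x : ℝ) : ℝ := 2 * Real.sinh x ^ 2 / x

lemma sinh_lt_mul_cosh' {x : ℝ} (hx : 0 < x) : Real.sinh x < x * Real.cosh x := by
  have h : StrictMonoOn (fun t : ℝ => t * Real.cosh t - Real.sinh t) (Set.Ici 0) := by
    apply strictMonoOn_of_deriv_pos (convex_Ici 0)
    · fun_prop
    · intro t ht
      rw [interior_Ici] at ht
      have hd : HasDerivAt (fun t : ℝ => t * Real.cosh t - Real.sinh t)
          (1 * Real.cosh t + t * Real.sinh t - Real.cosh t) t :=
        ((hasDerivAt_id t).mul (Real.hasDerivAt_cosh t)).sub (Real.hasDerivAt_sinh t)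
      rw [hd.deriv]
      have h1 : 0 < Real.sinh t := Real.sinh_pos_iff.2 ht
      have h2 : (0:ℝ) < t := ht
      nlinarith
  have := h Set.self_mem_Ici (Set.mem_Ici.2 hx.le) hx
  simp only [Real.sinh_zero, Real.cosh_zero, zero_mul, sub_zero, mul_zero] at this
  linarith

lemma gfun_strictMonoOn : StrictMonoOn gfun (Set.Ioi 0) := by
  apply strictMonoOn_of_deriv_pos (convex_Ioi 0)
  · apply ContinuousOn.div (by fun_prop) continuousOn_id
    intro x hx; exact ne_of_gt hx
  · intro x hx
    rw [interior_Ioi] at hx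
    have hx0 : x ≠ 0 := ne_of_gt hx
    have h1 : HasDerivAt (fun x : ℝ => 2 * Real.sinh x ^ 2)
        (2 * (2 * Real.sinh x * Real.cosh x)) x := by
      have := (Real.hasDerivAt_sinh x).pow 2
      simpa [mul_comm, mul_assoc, mul_left_comm] using this.const_mul 2
    have h2 : HasDerivAt gfun
        ((2 * (2 * Real.sinh x * Real.cosh x) * x - 2 * Real.sinh x ^ 2 * 1) / x ^ 2) x :=
      h1.div (hasDerivAt_id x) hx0
    rw [h2.deriv]
    have hs : 0 < Real.sinh x := Real.sinh_pos_iff.2 hx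
    have hlt := sinh_lt_mul_cosh' hx
    have hcp := Real.cosh_pos x
    have hnum : 0 < 2 * (2 * Real.sinh x * Real.cosh x) * x - 2 * Real.sinh x ^ 2 * 1 := by
      nlinarith
    positivity


lemma gfun_alpha {c α : ℝ} (hα : 0 < α)
    (hαc : (1 - Real.exp (-(2 * α))) ^ 2 / (2 * α * Real.exp (-(2 * α))) = c) :
    gfun α = c := by
  have hE : Real.exp α ≠ 0 := (Real.exp_pos α).ne'
  have hα0 : α ≠ 0 := hα.ne'
  have he2 : Real.exp (-(2 * α)) = (Real.exp α)⁻¹ * (Real.exp α)⁻¹ := by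
    rw [show -(2*α) = (-α) + (-α) by ring, Real.exp_add, Real.exp_neg]
  have hden : 2 * α * Real.exp (-(2*α)) ≠ 0 := by positivity
  rw [div_eq_iff hden] at hαc
  rw [he2] at hαc
  unfold gfun
  rw [Real.sinh_eq, Real.exp_neg]
  rw [div_eq_iff hα0]
  field_simp at hαc ⊢
  have hne : Real.exp α * Real.exp α ≠ 0 := by positivity
  have key : (Real.exp α * Real.exp α - 1)^2 = c * (2*α) * (Real.exp α * Real.exp α) := by
    apply mul_right_cancel₀ hne
    linear_combination (Real.exp α * Real.exp α) * hαc
  linear_combination key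

lemma key_bounds {c : ℝ} (hc : 0 < c) {b : ℝ} (hb0 : 0 < b) (hb1 : b < 1) {L : ℕ} (hL : 2 ≤ L)
    (hcon : (1 - b ^ (2 * L)) ^ 2 / ((L : ℝ) ^ 2 * b ^ (2 * L) * (1 - b ^ 2)) = c / L) :
    c * b ^ 2 ≤ gfun (-(L : ℝ) * Real.log b) ∧ gfun (-(L : ℝ) * Real.log b) ≤ c := by
  have hL0 : (0:ℝ) < L := by positivity
  have hlogb : Real.log b < 0 := Real.log_neg hb0 hb1
  set u : ℝ := -(L : ℝ) * Real.log b with hu_def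
  have hu : 0 < u := by
    rw [hu_def]; exact mul_pos_of_neg_of_neg (by linarith) hlogb
  set y : ℝ := b ^ L with hy_def
  have hy0 : 0 < y := pow_pos hb0 L
  have hy1 : y < 1 := pow_lt_one₀ hb0.le hb1 (by omega)
  have hexp : Real.exp (-u) = y := by
    rw [hu_def, neg_mul, neg_neg, Real.exp_nat_mul, Real.exp_log hb0]
  have hexp' : Real.exp u = y⁻¹ := by
    rw [← hexp, ← Real.exp_neg, neg_neg]
  have hsinh : Real.sinh u = (1 - y^2) / (2 * y) := by
    rw [Real.sinh_eq, hexp, hexp']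
    field_simp
  have hYy : b ^ (2 * L) = y ^ 2 := by
    rw [hy_def, ← pow_mul, mul_comm]
  have hs1 : 1 - b ^ 2 > 0 := by nlinarith
  rw [hYy] at hcon
  have hden : ((L : ℝ) ^ 2 * y ^ 2 * (1 - b ^ 2)) ≠ 0 := by positivity
  rw [div_eq_div_iff hden hL0.ne'] at hcon
  -- hcon : (1 - y^2)^2 * L = c * (L^2 * y^2 * (1 - b^2))
  have hc2 : c * (1 - b^2) = (1 - y^2)^2 / ((L:ℝ) * y^2) := by
    rw [eq_div_iff (by positivity)]
    apply mul_left_cancel₀ hL0.ne'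
    linear_combination -hcon
  have hgu : gfun u = c * (1 - b^2) / (-Real.log (b^2)) := by
    have hlogsq : Real.log (b^2) = 2 * Real.log b := by
      rw [Real.log_pow]; push_cast; ring
    have h2u : -Real.log (b^2) = 2 * u / L := by
      rw [hlogsq, hu_def]; field_simp
    rw [h2u]
    unfold gfun
    rw [hsinh, hc2]
    field_simp
  rw [hgu]
  have hsq0 : (0:ℝ) < b ^ 2 := by positivity
  have hsq1 : b ^ 2 < 1 := by nlinarith
  have hlog2 : Real.log (b^2) < 0 := Real.log_neg hsq0 hsq1
  have ht : 0 < -Real.log (b^2) := by linarith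
  have hub : 1 - b^2 ≤ -Real.log (b^2) := by
    have := Real.log_le_sub_one_of_pos hsq0
    linarith
  have hlb : b^2 * (-Real.log (b^2)) ≤ 1 - b^2 := by
    have h1 : Real.log (b^2)⁻¹ ≤ (b^2)⁻¹ - 1 := by
      have := Real.log_le_sub_one_of_pos (inv_pos.2 hsq0)
      linarith
    rw [Real.log_inv] at h1
    have h2 : b^2 * (-Real.log (b^2)) ≤ b^2 * ((b^2)⁻¹ - 1) :=
      mul_le_mul_of_nonneg_left (by linarith) hsq0.le
    calc b^2 * (-Real.log (b^2)) ≤ b^2 * ((b^2)⁻¹ - 1) := h2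
      _ = 1 - b^2 := by field_simp
  constructor
  · rw [le_div_iff₀ ht]
    calc c * b^2 * (-Real.log (b^2)) = c * (b^2 * (-Real.log (b^2))) := by ring
      _ ≤ c * (1 - b^2) := mul_le_mul_of_nonneg_left hlb hc.le
  · rw [div_le_iff₀ ht]
    exact mul_le_mul_of_nonneg_left hub hc.le

theorem sum_rate_limit (c : ℝ) (hc : 0 < c) (β : ℕ → ℝ)
    (hβ : ∀ L : ℕ, 2 ≤ L → 0 < β L ∧ β L < 1 ∧
      (1 - β L ^ (2 * L)) ^ 2 / ((L : ℝ) ^ 2 * β L ^ (2 * L) * (1 - β L ^ 2)) = c / L)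
    (α : ℝ) (hα : 0 < α)
    (hαc : (1 - Real.exp (-(2 * α))) ^ 2 / (2 * α * Real.exp (-(2 * α))) = c) :
    Filter.Tendsto (fun L : ℕ => -(L : ℝ) * Real.logb 2 (β L))
      Filter.atTop (nhds (α / Real.log 2)) := by
  have hgα : gfun α = c := gfun_alpha hα hαc
  have hmain : Tendsto (fun L : ℕ => -(L : ℝ) * Real.log (β L)) atTop (nhds α) := by
    rw [Metric.tendsto_atTop]
    intro ε hε
    set ε' : ℝ := min ε (α / 2) with hε'_def
    have hε'0 : 0 < ε' := lt_min hε (by linarith)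
    have hε'α : ε' < α := (min_le_right _ _).trans_lt (by linarith)
    have hε'ε : ε' ≤ ε := min_le_left _ _
    have hmem1 : α - ε' ∈ Set.Ioi (0:ℝ) := by simp; linarith
    have hmemα : α ∈ Set.Ioi (0:ℝ) := hα
    have hmem2 : α + ε' ∈ Set.Ioi (0:ℝ) := by simp; linarith
    have hglt : gfun (α - ε') < c := by
      rw [← hgα]; exact gfun_strictMonoOn hmem1 hmemα (by linarith)
    have hggt : c < gfun (α + ε') := by
      rw [← hgα]; exact gfun_strictMonoOn hmemα hmem2 (by linarith)
    set ρ : ℝ := gfun (α - ε') / c with hρ_def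
    have hρ1 : ρ < 1 := (div_lt_one hc).2 hglt
    set δ : ℝ := min (1 - ρ) (1/2) with hδ_def
    have hδ0 : 0 < δ := lt_min (by linarith) (by norm_num)
    have hδ1 : δ < 1 := (min_le_right _ _).trans_lt (by norm_num)
    have hδρ : 1 - δ ≥ ρ := by
      have := min_le_left (1 - ρ) (1/2); simp only [← hδ_def] at this; linarith
    have hten : Tendsto (fun n : ℕ => (n : ℝ) * (1 - δ) ^ n) atTop (nhds 0) :=
      tendsto_self_mul_const_pow_of_lt_one (by linarith) (by linarith)
    rw [Metric.tendsto_atTop] at hten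
    obtain ⟨N₀, hN₀⟩ := hten (δ ^ 2 / c) (by positivity)
    refine ⟨max N₀ 2, fun n hn => ?_⟩
    have hn2 : 2 ≤ n := le_trans (le_max_right _ _) hn
    have hnN₀ : N₀ ≤ n := le_trans (le_max_left _ _) hn
    obtain ⟨hb0, hb1, hcon⟩ := hβ n hn2
    have hsmall : c * (n : ℝ) * (1 - δ) ^ n < δ ^ 2 := by
      have h1 := hN₀ n hnN₀
      have hδle : (0:ℝ) ≤ 1 - δ := by linarith
      have hnn : (0:ℝ) ≤ (n:ℝ) * (1 - δ) ^ n := by positivity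
      rw [Real.dist_eq, sub_zero, abs_of_nonneg hnn] at h1
      calc c * (n:ℝ) * (1-δ)^n = ((n:ℝ) * (1-δ)^n) * c := by ring
        _ < δ^2 / c * c := by apply mul_lt_mul_of_pos_right h1 hc
        _ = δ^2 := by field_simp
    -- show β n ^ 2 > 1 - δ
    have hn0 : (0:ℝ) < n := by positivity
    have hs : 1 - δ < β n ^ 2 := by
      by_contra h
      push_neg at h
      have hδle : (0:ℝ) ≤ 1 - δ := by linarith
      have hb2nonneg : (0:ℝ) ≤ β n ^ 2 := by positivity
      have hY : β n ^ (2 * n) = (β n ^ 2) ^ n := by rw [← pow_mul]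
      have hYle : β n ^ (2 * n) ≤ (1 - δ) ^ n := by
        rw [hY]; exact pow_le_pow_left₀ hb2nonneg h n
      have hYle2 : β n ^ (2 * n) ≤ (1 - δ) ^ 2 := by
        calc β n ^ (2*n) ≤ (1-δ)^n := hYle
          _ ≤ (1-δ)^2 := pow_le_pow_of_le_one hδle (by linarith) hn2
      have h1Y : δ ≤ 1 - β n ^ (2*n) := by nlinarith [hYle2, hδ0, hδ1]
      have hYpos : (0:ℝ) < β n ^ (2*n) := by positivity
      have hb2lt : β n ^ 2 < 1 := by nlinarith [hb1, hb0]
      have hsub : (0:ℝ) < 1 - β n ^ 2 := by linarith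
      have hden : ((n : ℝ) ^ 2 * β n ^ (2 * n) * (1 - β n ^ 2)) ≠ 0 := by positivity
      rw [div_eq_div_iff hden hn0.ne'] at hcon
      -- hcon : (1-Y)^2 * n = c * (n^2 * Y * (1-s)) -- check orientation below
      have hA : δ^2 ≤ (1 - β n ^ (2*n))^2 := by
        have : (0:ℝ) ≤ δ := hδ0.le
        exact pow_le_pow_left₀ this h1Y 2
      have hprod : β n ^ (2*n) * (1 - β n ^ 2) ≤ (1-δ)^n := by
        calc β n ^ (2*n) * (1 - β n ^ 2) ≤ β n ^ (2*n) * 1 :=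
              mul_le_mul_of_nonneg_left (by linarith) hYpos.le
          _ = β n ^ (2*n) := mul_one _
          _ ≤ (1-δ)^n := hYle
      have hchain : δ^2 * (n:ℝ) < δ^2 * (n:ℝ) := by
        calc δ^2 * (n:ℝ) ≤ (1 - β n ^ (2*n))^2 * (n:ℝ) :=
              mul_le_mul_of_nonneg_right hA hn0.le
          _ = c * ((n:ℝ)^2 * β n ^ (2*n) * (1 - β n ^ 2)) := hcon
          _ = c * ((n:ℝ)^2 * (β n ^ (2*n) * (1 - β n ^ 2))) := by ring
          _ ≤ c * ((n:ℝ)^2 * (1-δ)^n) := by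
              apply mul_le_mul_of_nonneg_left _ hc.le
              exact mul_le_mul_of_nonneg_left hprod (by positivity)
          _ = (c * (n:ℝ) * (1-δ)^n) * (n:ℝ) := by ring
          _ < δ^2 * (n:ℝ) := mul_lt_mul_of_pos_right hsmall hn0
      exact absurd hchain (lt_irrefl _)
    -- bounds from key lemma
    obtain ⟨hkl, hku⟩ := key_bounds hc hb0 hb1 hn2 hcon
    set u : ℝ := -(n : ℝ) * Real.log (β n) with hu_def
    have hu0 : 0 < u := by
      have := Real.log_neg hb0 hb1
      rw [hu_def]; exact mul_pos_of_neg_of_neg (by push_cast; linarith) this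
    have hgl : gfun (α - ε') < gfun u := by
      calc gfun (α - ε') = ρ * c := by rw [hρ_def, div_mul_cancel₀ _ hc.ne']
        _ ≤ (1 - δ) * c := by apply mul_le_mul_of_nonneg_right hδρ hc.le
        _ < β n ^ 2 * c := by apply mul_lt_mul_of_pos_right hs hc
        _ = c * β n ^ 2 := by ring
        _ ≤ gfun u := hkl
    have hgu : gfun u < gfun (α + ε') := lt_of_le_of_lt hku hggt
    have hul : α - ε' < u := by
      by_contra h
      push_neg at h
      have := gfun_strictMonoOn.monotoneOn (Set.mem_Ioi.2 hu0) hmem1 h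
      linarith
    have huu : u < α + ε' := by
      by_contra h
      push_neg at h
      have := gfun_strictMonoOn.monotoneOn hmem2 (Set.mem_Ioi.2 hu0) h
      linarith
    rw [Real.dist_eq, abs_lt]
    constructor <;> [linarith; linarith]
  have h2 : (fun L : ℕ => -(L : ℝ) * Real.logb 2 (β L))
      = fun L : ℕ => (-(L : ℝ) * Real.log (β L)) / Real.log 2 := by
    funext L
    rw [Real.logb]
    ring
  rw [h2]
  exact hmain.div_const _
end

section
/- Fix an integer L ≥ 1, a real β ∈ (0,1), and an integer n ≥ 1. Let F be the (n+1)×(n+1) real matrix with entries F[t,m] = −((1 − β^{2L})/(L·β)) · β^{L·⌊(t−m−1)/L⌋ − ((t−m−1) mod L)} whenever t > m, and F[t,m] = 0 whenever t ≤ m (indices t, m ∈ {0,…,n}), and let q ∈ ℝ^{n+1} be the vector with q[i] = β^i for i = 0,…,n. Define ψ := (I + F)ᵀ q, i.e. ψ[m] = q[m] + Σ_{t=0}^{n} q[t]·F[t,m]. Then Σ_{m=0}^{n} ψ[m]² = β^{2n} + Σ_{d=0}^{n−1} β^{2(n−d−1) + 4L·⌊d/L⌋} · (1 − ((d mod L)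 + 1)·(1 − β^{2L})/L)². -/
theorem psi_norm_sq (L : ℕ) (hL : 1 ≤ L) (β : ℝ) (hβ0 : 0 < β) (hβ1 : β < 1)
    (n : ℕ) (hn : 1 ≤ n)
    (F : Matrix (Fin (n + 1)) (Fin (n + 1)) ℝ)
    (hF : ∀ t m : Fin (n + 1), F t m =
      if (m : ℕ) < (t : ℕ) then
        -((1 - β ^ (2 * L)) / (L * β)) *
          (β ^ (L * (((t : ℕ) - (m : ℕ) - 1) / L)) / β ^ (((t : ℕ) - (m : ℕ) - 1) % L))
      else 0)
    (q : Fin (n + 1) → ℝ) (hq : ∀ i : Fin (n + 1), q i = β ^ (i : ℕ))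
    (ψ : Fin (n + 1) → ℝ)
    (hψ : ∀ m : Fin (n + 1), ψ m = q m + ∑ t : Fin (n + 1), q t * F t m) :
    ∑ m : Fin (n + 1), (ψ m) ^ 2 =
      β ^ (2 * n) + ∑ d ∈ Finset.range n,
        β ^ (2 * (n - d - 1) + 4 * L * (d / L)) *
          (1 - ((d % L : ℕ) + 1) * (1 - β ^ (2 * L)) / L) ^ 2 := by
  have hβne : β ≠ 0 := ne_of_gt hβ0
  have hLpos : 0 < L := hL
  have hLR : (0:ℝ) < (L:ℝ) := by exact_mod_cast hLpos
  have hLne : (L:ℝ) ≠ 0 := ne_of_gt hLR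
  set e : ℝ := (1 - β ^ (2 * L)) / L with he
  have heL : e * L = 1 - β ^ (2 * L) := by rw [he, div_mul_cancel₀ _ hLne]
  set S : ℕ → ℝ := fun k => ∑ j ∈ Finset.range k, β ^ (2 * L * (j / L)) with hSdef
  have hSk : ∀ k, (∑ j ∈ Finset.range k, β ^ (2 * L * (j / L))) = S k := fun _ => rfl
  -- Lemma B: closed form for the partial sums
  have hB : ∀ d : ℕ, 1 - e * S (d + 1) =
      β ^ (2 * L * (d / L)) * (1 - ((d % L : ℕ) + 1) * e) := by
    intro d
    induction d with
    | zero =>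
      have h0 : S 1 = 1 := by simp [hSdef]
      simp [h0, Nat.zero_div, Nat.zero_mod]
    | succ d ih =>
      have hS1 : S (d + 1 + 1) = S (d + 1) + β ^ (2 * L * ((d+1) / L)) := by
        simp [hSdef, Finset.sum_range_succ]
      have hmd : d % L + L * (d / L) = d := Nat.mod_add_div d L
      have hmlt : d % L < L := Nat.mod_lt _ hLpos
      have hsd : (d+1) / L = d / L + if L ∣ d + 1 then 1 else 0 := Nat.succ_div
      have hsplit : d % L + 1 + L * (d / L) = d + 1 := by
        rw [Nat.add_right_comm, hmd]
      have hmod1 : (d + 1) % L = (d % L + 1) % L := by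
        rw [← hsplit, Nat.add_mul_mod_self_left]
      by_cases hdvd : L ∣ (d + 1)
      · -- block boundary case
        obtain ⟨k, hk⟩ := hdvd
        have hr0 : (d+1) % L = 0 := by rw [hk]; exact Nat.mul_mod_right L k
        have hq1 : (d+1) / L = d / L + 1 := by
          rw [hsd, if_pos ⟨k, hk⟩]
        have hrL : d % L + 1 = L := by
          have hdd : L ∣ d % L + 1 := Nat.dvd_of_mod_eq_zero (by rw [← hmod1, hr0])
          exact Nat.le_antisymm hmlt (Nat.le_of_dvd (Nat.succ_pos _) hdd)
        have hpow : β ^ (2 * L * ((d+1) / L)) = β ^ (2 * L * (d / L)) * β ^ (2 * L) := by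
          rw [hq1, Nat.mul_add, pow_add, Nat.mul_one]
        have hcast : ((d % L : ℕ) : ℝ) + 1 = (L : ℝ) := by exact_mod_cast hrL
        rw [hS1, hr0, hpow]
        rw [hcast] at ih
        push_cast
        linear_combination ih - β ^ (2 * L * (d / L)) * heL
      · -- interior case
        have hq1 : (d+1) / L = d / L := by rw [hsd, if_neg hdvd]; omega
        have hrne : (d + 1) % L ≠ 0 := fun h => hdvd (Nat.dvd_of_mod_eq_zero h)
        have hrlt : d % L + 1 < L := by
          rcases Nat.lt_or_ge (d % L + 1) L with h | h
          · exact h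
          · exfalso
            have : d % L + 1 = L := Nat.le_antisymm hmlt h
            exact hrne (by rw [hmod1, this, Nat.mod_self])
        have hr1 : (d + 1) % L = d % L + 1 := by
          rw [hmod1, Nat.mod_eq_of_lt hrlt]
        rw [hS1, hr1, hq1]
        push_cast
        linear_combination ih
  -- Lemma A: closed form for ψ
  have hA : ∀ m : Fin (n + 1), ψ m = β ^ (m : ℕ) * (1 - e * S (n - (m : ℕ))) := by
    intro m
    have hsum : ∑ t : Fin (n + 1), q t * F t m =
        ∑ t ∈ Finset.range (n + 1), (β ^ t *
          (if (m : ℕ) < t then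
            -((1 - β ^ (2 * L)) / (L * β)) *
              (β ^ (L * ((t - (m : ℕ) - 1) / L)) / β ^ ((t - (m : ℕ) - 1) % L))
          else 0)) := by
      rw [← Fin.sum_univ_eq_sum_range]
      refine Finset.sum_congr rfl fun t _ => ?_
      rw [hq, hF]
    have hzero : ∀ t ∈ Finset.range (n + 1), t ∉ Finset.Ico ((m : ℕ) + 1) (n + 1) →
        (β ^ t *
          (if (m : ℕ) < t then
            -((1 - β ^ (2 * L)) / (L * β)) *
              (β ^ (L * ((t - (m : ℕ) - 1) / L)) / β ^ ((t - (m : ℕ) - 1) % L))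
          else 0)) = 0 := by
      intro t ht ht'
      simp only [Finset.mem_range] at ht
      simp only [Finset.mem_Ico] at ht'
      have : ¬ ((m : ℕ) < t) := by omega
      rw [if_neg this, mul_zero]
    have hsub : Finset.Ico ((m : ℕ) + 1) (n + 1) ⊆ Finset.range (n + 1) := by
      intro x hx
      simp only [Finset.mem_Ico] at hx
      simp only [Finset.mem_range]
      exact hx.2
    have hterm : ∀ j : ℕ,
        (β ^ ((m : ℕ) + 1 + j) *
          (if (m : ℕ) < (m : ℕ) + 1 + j then
            -((1 - β ^ (2 * L)) / (L * β)) *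
              (β ^ (L * (((m : ℕ) + 1 + j - (m : ℕ) - 1) / L)) /
                β ^ (((m : ℕ) + 1 + j - (m : ℕ) - 1) % L))
          else 0)) = -(e * (β ^ (m : ℕ) * β ^ (2 * L * (j / L)))) := by
      intro j
      have hlt : (m : ℕ) < (m : ℕ) + 1 + j := by omega
      have hj : (m : ℕ) + 1 + j - (m : ℕ) - 1 = j := by omega
      have hpowgen : ∀ a b c : ℕ, b + c = a →
          β ^ ((m : ℕ) + 1 + a) * β ^ c = β ^ b * (β * (β ^ (m : ℕ) * (β ^ c * β ^ c))) := by
        intro a b c h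
        subst h
        have hexp : ((m : ℕ) + 1 + (b + c)) + c = b + (1 + ((m : ℕ) + (c + c))) := by omega
        rw [← pow_add, hexp, pow_add, pow_add, pow_add, pow_add, pow_one]
      have hpow := hpowgen j (j % L) (L * (j / L)) (Nat.mod_add_div j L)
      have h2c : β ^ (2 * L * (j / L)) = β ^ (L * (j / L)) * β ^ (L * (j / L)) := by
        rw [← pow_add]; congr 1; ring
      rw [if_pos hlt, hj, h2c, he]
      have hbne : (β:ℝ) ^ (j % L) ≠ 0 := pow_ne_zero _ hβne
      have hj' : β ^ ((m : ℕ) + 1 + j) = β ^ (m : ℕ) * β * β ^ (j % L) * β ^ (L * (j / L)) := by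
        rw [← pow_succ, ← pow_add, ← pow_add]; congr 1; have := Nat.mod_add_div j L; omega
      rw [hj']
      field_simp
    rw [hψ, hsum, hq, ← Finset.sum_subset hsub hzero, Finset.sum_Ico_eq_sum_range]
    have hNm : n + 1 - ((m : ℕ) + 1) = n - (m : ℕ) := by omega
    rw [hNm, Finset.sum_congr rfl fun j _ => hterm j, Finset.sum_neg_distrib,
      ← Finset.mul_sum, ← Finset.mul_sum, hSk]
    ring
  -- assemble
  rw [Fin.sum_univ_castSucc]
  have hS0 : S 0 = 0 := by simp [hSdef]
  have hlast : (ψ (Fin.last n)) ^ 2 = β ^ (2 * n) := by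
    rw [hA, Fin.val_last, Nat.sub_self, hS0, mul_zero, sub_zero, mul_one, ← pow_mul,
      Nat.mul_comm]
  have hmain : ∑ i : Fin n, ψ (Fin.castSucc i) ^ 2 =
      ∑ d ∈ Finset.range n,
        β ^ (2 * (n - d - 1) + 4 * L * (d / L)) *
          (1 - ((d % L : ℕ) + 1) * (1 - β ^ (2 * L)) / L) ^ 2 := by
    have h1 : ∀ i : Fin n, ψ (Fin.castSucc i) ^ 2 =
        (fun m : ℕ => (β ^ m * (1 - e * S (n - m))) ^ 2) (i : ℕ) := by
      intro i
      rw [hA]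
      simp [Fin.coe_castSucc]
    calc ∑ i : Fin n, ψ (Fin.castSucc i) ^ 2
        = ∑ i : Fin n, (fun m : ℕ => (β ^ m * (1 - e * S (n - m))) ^ 2) (i : ℕ) :=
          Finset.sum_congr rfl fun i _ => h1 i
      _ = ∑ m ∈ Finset.range n, (β ^ m * (1 - e * S (n - m))) ^ 2 := by
          exact Fin.sum_univ_eq_sum_range (fun m => (β ^ m * (1 - e * S (n - m))) ^ 2) n
      _ = ∑ d ∈ Finset.range n, (β ^ (n - 1 - d) * (1 - e * S (n - (n - 1 - d)))) ^ 2 :=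
          (Finset.sum_range_reflect _ n).symm
      _ = _ := by
          refine Finset.sum_congr rfl fun d hd => ?_
          have hd' : d < n := Finset.mem_range.mp hd
          have h2 : n - (n - 1 - d) = d + 1 := by omega
          rw [h2, hB d, he, ← mul_div_assoc, mul_pow, mul_pow, ← pow_mul, ← pow_mul,
            ← mul_assoc, ← pow_add]
          have e1 : (n - 1 - d) * 2 + 2 * L * (d / L) * 2 = 2 * (n - d - 1) + 4 * L * (d / L) := by
            have h3 : (n - 1 - d) * 2 = 2 * (n - d - 1) := by omega
            rw [h3]; ring
          rw [e1]
  rw [hlast, hmain]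
  exact add_comm _ _
end
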